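/- Let H = H⁺ ⊕ H⁻ be a finite-dimensional Z₂-graded inner product space and D a self-adjoint odd operator with □ = D². Then for every t > 0 the supertrace Str(e^{−t□}) = trace(ε e^{−t□}) is independent of t and equals dim ker(□|_{H⁺}) − dim ker(□|_{H⁻}) = dim ker D_+ − dim ker D_−. -/

import Mathlib

/-!
Let `P` be the orthogonal projection onto `ker D`. Since `D` is self-adjoint, `P D = D P = 0`,
so `D + P` is invertible and commutes with `D`, whence `1 - P = X D` with `X` commuting with `D`.
The heat operator `e^{-tD²}` fixes `ker D` and commutes with `D`, so
`Str e^{-tD²} = Str P + Str (e^{-tD²} X D)`, and the last term vanishes because `ε` anticommutes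
with `D`: `tr (ε A D) = tr (D ε A) = -tr (ε D A)`. Finally `ε` preserves `ker D`, and
`(P ± εP)/2` are projections onto `ker D ∩ H^±`, so `Str P = dim ker D₊ - dim ker D₋`;
and `ker D² = ker D` by self-adjointness.
-/

open RealInnerProductSpace

open LinearMap Module

section Supertrace

variable {𝕜 V : Type*} [Field 𝕜] [NeZero (2 : 𝕜)] [AddCommGroup V] [Module 𝕜 V]

theorem trace_mul_mul_eq_zero_of_anticommute {ε x d : Module.End 𝕜 V}
    (hεd : ε * d = -(d * ε)) (hx : Commute x d) : trace 𝕜 V (ε * x * d) = 0 := by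
  have h : trace 𝕜 V (ε * x * d) = -trace 𝕜 V (ε * x * d) :=
    calc trace 𝕜 V (ε * x * d) = trace 𝕜 V (d * ε * x) := by
          rw [trace_mul_comm, mul_assoc]
      _ = -trace 𝕜 V (ε * d * x) := by rw [← map_neg, hεd, neg_mul, neg_neg]
      _ = -trace 𝕜 V (ε * x * d) := by rw [mul_assoc, ← hx.eq, mul_assoc]
  rw [eq_neg_iff_add_eq_zero, ← two_mul, mul_eq_zero] at h
  exact h.resolve_left two_ne_zero

theorem trace_mul_eq_trace_mul_of_anticommute {ε d e p x : Module.End 𝕜 V}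
    (hεd : ε * d = -(d * ε)) (hed : Commute e d) (hep : e * p = p)
    (hx : Commute x d) (hxd : x * d = 1 - p) : trace 𝕜 V (ε * e) = trace 𝕜 V (ε * p) := by
  have hsplit : ε * e = ε * p + ε * (e * x) * d := by
    rw [mul_assoc ε, mul_assoc e, hxd, mul_sub, mul_one, hep, mul_sub, add_sub_cancel]
  rw [hsplit, map_add, trace_mul_mul_eq_zero_of_anticommute hεd (hed.mul_left hx), add_zero]

end Supertrace

section Grading

variable {𝕜 V : Type*} [Field 𝕜] [AddCommGroup V] [Module 𝕜 V]
  {Hp Hm : Submodule 𝕜 V} {ε : Module.End 𝕜 V}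

theorem exists_add_eq_and_grading_eq_sub (hcompl : IsCompl Hp Hm)
    (hεp : ∀ x ∈ Hp, ε x = x) (hεm : ∀ x ∈ Hm, ε x = -x) (x : V) :
    ∃ a ∈ Hp, ∃ b ∈ Hm, x = a + b ∧ ε x = a - b := by
  obtain ⟨a, b, ha, hb, rfl⟩ := Submodule.codisjoint_iff_exists_add_eq.mp hcompl.codisjoint x
  exact ⟨a, ha, b, hb, rfl, by rw [map_add, hεp a ha, hεm b hb, sub_eq_add_neg]⟩

theorem grading_mul_eq_neg_mul_grading (hcompl : IsCompl Hp Hm)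
    (hεp : ∀ x ∈ Hp, ε x = x) (hεm : ∀ x ∈ Hm, ε x = -x) {d : Module.End 𝕜 V}
    (hdp : ∀ x ∈ Hp, d x ∈ Hm) (hdm : ∀ x ∈ Hm, d x ∈ Hp) : ε * d = -(d * ε) := by
  ext x
  obtain ⟨a, ha, b, hb, rfl, hεx⟩ := exists_add_eq_and_grading_eq_sub hcompl hεp hεm x
  rw [LinearMap.neg_apply, Module.End.mul_apply, Module.End.mul_apply, hεx, map_add, map_add,
    map_sub, hεm _ (hdp a ha), hεp _ (hdm b hb)]
  abel

variable [NeZero (2 : 𝕜)]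

theorem isProj_inf_of_isProj_of_grading (hcompl : IsCompl Hp Hm)
    (hεp : ∀ x ∈ Hp, ε x = x) (hεm : ∀ x ∈ Hm, ε x = -x) {K : Submodule 𝕜 V}
    {p : Module.End 𝕜 V} (hp : IsProj K p) (hεK : ∀ x ∈ K, ε x ∈ K) :
    IsProj (K ⊓ Hp) ((2⁻¹ : 𝕜) • (p + ε * p)) ∧ IsProj (K ⊓ Hm) ((2⁻¹ : 𝕜) • (p - ε * p)) := by
  have half_two_smul (y : V) : (2⁻¹ : 𝕜) • (2 : 𝕜) • y = y := inv_smul_smul₀ two_ne_zero y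
  refine ⟨⟨fun x => ?_, fun x ⟨hxK, hx⟩ => ?_⟩, ⟨fun x => ?_, fun x ⟨hxK, hx⟩ => ?_⟩⟩
  all_goals simp only [LinearMap.smul_apply, LinearMap.add_apply, LinearMap.sub_apply,
    Module.End.mul_apply]
  · obtain ⟨a, ha, b, -, hpx, hεpx⟩ := exists_add_eq_and_grading_eq_sub hcompl hεp hεm (p x)
    refine ⟨K.smul_mem _ (K.add_mem (hp.map_mem x) (hεK _ (hp.map_mem x))), ?_⟩
    rw [hεpx, hpx, show a + b + (a - b) = (2 : 𝕜) • a by rw [two_smul]; abel, half_two_smul]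
    exact ha
  · rw [hp.map_id x hxK, hεp x hx, ← two_smul 𝕜, half_two_smul]
  · obtain ⟨a, -, b, hb, hpx, hεpx⟩ := exists_add_eq_and_grading_eq_sub hcompl hεp hεm (p x)
    refine ⟨K.smul_mem _ (K.sub_mem (hp.map_mem x) (hεK _ (hp.map_mem x))), ?_⟩
    rw [hεpx, hpx, show a + b - (a - b) = (2 : 𝕜) • b by rw [two_smul]; abel, half_two_smul]
    exact hb
  · rw [hp.map_id x hxK, hεm x hx, sub_neg_eq_add, ← two_smul 𝕜, half_two_smul]

theorem trace_grading_mul_of_isProj [FiniteDimensional 𝕜 V] (hcompl : IsCompl Hp Hm)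
    (hεp : ∀ x ∈ Hp, ε x = x) (hεm : ∀ x ∈ Hm, ε x = -x) {K : Submodule 𝕜 V}
    {p : Module.End 𝕜 V} (hp : IsProj K p) (hεK : ∀ x ∈ K, ε x ∈ K) :
    trace 𝕜 V (ε * p) = finrank 𝕜 ↥(K ⊓ Hp) - finrank 𝕜 ↥(K ⊓ Hm) := by
  obtain ⟨hplus, hminus⟩ := isProj_inf_of_isProj_of_grading hcompl hεp hεm hp hεK
  have hsplit : ε * p = (2⁻¹ : 𝕜) • (p + ε * p) - (2⁻¹ : 𝕜) • (p - ε * p) := by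
    rw [← smul_sub, add_sub_sub_cancel, ← two_smul 𝕜, inv_smul_smul₀ two_ne_zero]
  rw [hsplit, map_sub, hplus.trace, hminus.trace]

end Grading

theorem NormedSpace.exp_mul_eq_self_of_mul_eq_zero (𝕂 : Type*) {𝔸 : Type*} [RCLike 𝕂]
    [NormedRing 𝔸] [NormedAlgebra 𝕂 𝔸] [CompleteSpace 𝔸] {a b : 𝔸} (h : a * b = 0) :
    exp a * b = b := by
  have hterm (n : ℕ) (hn : n ≠ 0) : ((n.factorial⁻¹ : 𝕂) • a ^ n) * b = 0 := by
    obtain ⟨k, rfl⟩ := Nat.exists_eq_succ_of_ne_zero hn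
    rw [smul_mul_assoc, pow_succ, mul_assoc, h, mul_zero, smul_zero]
  rw [exp_eq_tsum 𝕂, ← (expSeries_summable' (𝕂 := 𝕂) a).tsum_mul_right, tsum_eq_single 0 hterm]
  simp

namespace LinearMap.IsSymmetric

variable {𝕜 E : Type*} [RCLike 𝕜] [NormedAddCommGroup E] [InnerProductSpace 𝕜 E]
  {T : E →ₗ[𝕜] E}

theorem ker_mul_self (hT : T.IsSymmetric) : ker (T * T) = ker T := by
  refine le_antisymm (fun x hx => ?_) (fun x hx => by simp_all)
  rw [mem_ker, ← inner_self_eq_zero (𝕜 := 𝕜), ← hT]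
  simp_all

variable [FiniteDimensional 𝕜 E]

theorem starProjection_ker_mul (hT : T.IsSymmetric) :
    ((ker T).starProjection : E →ₗ[𝕜] E) * T = 0 := by
  ext x
  rw [Module.End.mul_apply, ContinuousLinearMap.coe_coe, zero_apply,
    Submodule.starProjection_apply_eq_zero_iff, ← hT.orthogonal_range,
    Submodule.orthogonal_orthogonal]
  exact mem_range_self T x

theorem exists_commute_mul_eq_one_sub_starProjection_ker (hT : T.IsSymmetric) :
    ∃ x : Module.End 𝕜 E, Commute x T ∧ x * T = 1 - ((ker T).starProjection : E →ₗ[𝕜] E) := by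
  set P : Module.End 𝕜 E := ((ker T).starProjection : E →ₗ[𝕜] E)
  have hTP : T * P = 0 := by
    ext x
    exact (ker T).starProjection_apply_mem x
  have hPT : P * T = 0 := hT.starProjection_ker_mul
  have hPP : P * P = P := (ContinuousLinearMap.IsIdempotentElem.toLinearMap
    (ker T).isIdempotentElem_starProjection).eq
  have hunit : IsUnit (T + P) := by
    refine (isUnit_iff_ker_eq_bot _).mpr (eq_bot_iff.mpr fun x hx => ?_)
    have hPx : P x = 0 := by
      simpa [← Module.End.mul_apply, mul_add, hPT, hPP] using congrArg P hx
    have hTx : x ∈ ker T := by simpa [hPx] using hx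
    rw [← (ker T).starProjection_eq_self_iff.mpr hTx]
    exact hPx
  have hcomm : Commute (T + P) T := by
    rw [commute_iff_eq, add_mul, mul_add, hPT, hTP]
  have hfactor : (T + P) * (1 - P) = T := by
    rw [mul_sub, mul_one, add_mul, hTP, hPP, zero_add, add_sub_cancel_right]
  obtain ⟨u, hu⟩ := hunit
  refine ⟨↑u⁻¹, (hu ▸ hcomm).units_inv_left, ?_⟩
  rw [← hfactor, ← hu, u.inv_mul_cancel_left]

end LinearMap.IsSymmetric

theorem stmt_8_general {H : Type*} [NormedAddCommGroup H] [InnerProductSpace ℝ H]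
    [FiniteDimensional ℝ H]
    (Hp Hm : Submodule ℝ H) (hcompl : IsCompl Hp Hm)
    (D : H →L[ℝ] H)
    (hD_sa : ∀ x y : H, ⟪D x, y⟫ = ⟪x, D y⟫)
    (hD_odd : (∀ x ∈ Hp, D x ∈ Hm) ∧ (∀ x ∈ Hm, D x ∈ Hp))
    (ε : H →ₗ[ℝ] H) (hεp : ∀ x ∈ Hp, ε x = x) (hεm : ∀ x ∈ Hm, ε x = -x) :
    ∀ t : ℝ, 0 < t →
      LinearMap.trace ℝ H (ε ∘ₗ (NormedSpace.exp ((-t) • (D.comp D))).toLinearMap) =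
          (Module.finrank ℝ (LinearMap.ker ((D.comp D : H →L[ℝ] H) : H →ₗ[ℝ] H) ⊓ Hp : Submodule ℝ H) : ℝ)
            - (Module.finrank ℝ (LinearMap.ker ((D.comp D : H →L[ℝ] H) : H →ₗ[ℝ] H) ⊓ Hm : Submodule ℝ H) : ℝ)
      ∧ LinearMap.trace ℝ H (ε ∘ₗ (NormedSpace.exp ((-t) • (D.comp D))).toLinearMap) =
          (Module.finrank ℝ (LinearMap.ker (D : H →ₗ[ℝ] H) ⊓ Hp : Submodule ℝ H) : ℝ)
            - (Module.finrank ℝ (LinearMap.ker (D : H →ₗ[ℝ] H) ⊓ Hm : Submodule ℝ H) : ℝ) := by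
  intro t _
  have hD : (D : H →ₗ[ℝ] H).IsSymmetric := hD_sa
  set K := ker (D : H →ₗ[ℝ] H)
  set E := NormedSpace.exp ((-t) • D.comp D)
  have hE_P : E * K.starProjection = K.starProjection := by
    refine NormedSpace.exp_mul_eq_self_of_mul_eq_zero ℝ ?_
    ext y
    have hDP : D (K.starProjection y) = 0 := K.starProjection_apply_mem y
    simp [hDP]
  have hE_D : Commute E D := (((Commute.refl D).mul_left (Commute.refl D)).smul_left (-t)).exp_left
  have hεD : ε * D = -(D * ε) :=
    grading_mul_eq_neg_mul_grading hcompl hεp hεm hD_odd.1 hD_odd.2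
  obtain ⟨x, hxD, hx⟩ := hD.exists_commute_mul_eq_one_sub_starProjection_ker
  have hεK (y) (hy : y ∈ K) : ε y ∈ K := by
    rw [mem_ker] at hy ⊢
    simpa [hy] using LinearMap.congr_fun hεD y
  have hstr : trace ℝ H (ε * E) = finrank ℝ ↥(K ⊓ Hp) - finrank ℝ ↥(K ⊓ Hm) := by
    refine (trace_mul_eq_trace_mul_of_anticommute hεD
      (hE_D.map ContinuousLinearMap.toLinearMapRingHom)
      (congrArg ContinuousLinearMap.toLinearMapRingHom hE_P) hxD hx).trans ?_
    exact trace_grading_mul_of_isProj hcompl hεp hεm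
      ⟨K.starProjection_apply_mem, fun y hy => K.starProjection_eq_self_iff.mpr hy⟩ hεK
  rw [ContinuousLinearMap.toLinearMap_comp, ← Module.End.mul_eq_comp (D : H →ₗ[ℝ] H),
    hD.ker_mul_self]
  exact ⟨hstr, hstr⟩

theorem stmt_8 {H : Type*} [NormedAddCommGroup H] [InnerProductSpace ℝ H]
    [FiniteDimensional ℝ H]
    (Hp Hm : Submodule ℝ H) (hcompl : IsCompl Hp Hm)
    (horth : ∀ x ∈ Hp, ∀ y ∈ Hm, ⟪x, y⟫ = 0)
    (D : H →L[ℝ] H)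
    (hD_sa : ∀ x y : H, ⟪D x, y⟫ = ⟪x, D y⟫)
    (hD_odd : (∀ x ∈ Hp, D x ∈ Hm) ∧ (∀ x ∈ Hm, D x ∈ Hp))
    (ε : H →ₗ[ℝ] H) (hεp : ∀ x ∈ Hp, ε x = x) (hεm : ∀ x ∈ Hm, ε x = -x) :
    ∀ t : ℝ, 0 < t →
      LinearMap.trace ℝ H (ε ∘ₗ (NormedSpace.exp ((-t) • (D.comp D))).toLinearMap) =
          (Module.finrank ℝ (LinearMap.ker ((D.comp D : H →L[ℝ] H) : H →ₗ[ℝ] H) ⊓ Hp : Submodule ℝ H) : ℝ)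
            - (Module.finrank ℝ (LinearMap.ker ((D.comp D : H →L[ℝ] H) : H →ₗ[ℝ] H) ⊓ Hm : Submodule ℝ H) : ℝ)
      ∧ LinearMap.trace ℝ H (ε ∘ₗ (NormedSpace.exp ((-t) • (D.comp D))).toLinearMap) =
          (Module.finrank ℝ (LinearMap.ker (D : H →ₗ[ℝ] H) ⊓ Hp : Submodule ℝ H) : ℝ)
            - (Module.finrank ℝ (LinearMap.ker (D : H →ₗ[ℝ] H) ⊓ Hm : Submodule ℝ H) : ℝ) :=
  stmt_8_general Hp Hm hcompl D hD_sa hD_odd ε hεp hεm
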